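/- arXiv:2104.12196 — 6 statements merged into one kernel-verified Lean document; each statement's English description precedes it below -/
import Mathlib

section
/- Let P and Q be nonzero polynomials with real coefficients all of which are algebraic over ℚ, defining the rational function g(s) = P(s)/Q(s). Let r be a rational number such that there do NOT exist an integer n with (r : ℚ) = n and a constant c ∈ ℝ for which s^n · g(s) = c for all real s > 0 with Q(s) ≠ 0 (i.e., r does not lie in the exceptional set E of integers n for which s^n g(s) is constant). Then for every transcendental real number t > 0, the number t^r · g(t) is transcendental over ℚ. (Here t^r is the real power rpow with exponent the real number r; note Q(t) ≠ 0 automatically since t is transcendental and Q is a nonzero polynomial with algebraic coefficients.) -/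
/-!
Write `r = a / b` in lowest terms and `u = t ^ (1 / b)`; then `u` is transcendental over the
field `K` of real algebraic numbers, and `P, Q` have coefficients in `K`. If `α = t ^ r g(t)` were
algebraic, then `u ^ a P(u ^ b) = α Q(u ^ b)`, with the sign of `a` cleared by moving a power of
`u` to the other side, would be a polynomial identity over `K` in the indeterminate `u`.
Comparing degrees gives `b ∣ a`, hence `b = 1`, and then the same identity says that
`s ^ r g(s) = α` for every `s > 0`, i.e. `r ∈ E`.
-/

open Polynomial

theorem Polynomial.int_dvd_sub_of_X_pow_mul_expand_eq {R : Type*} [CommSemiring R] [Nontrivial R]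
    {p q : R[X]} (hp : p ≠ 0) {b m n : ℕ} (hb : 0 < b)
    (h : X ^ m * expand R b p = X ^ n * expand R b q) : (b : ℤ) ∣ m - n := by
  have hq : q ≠ 0 := by
    rintro rfl
    rw [map_zero, mul_zero, (monic_X_pow m).mul_right_eq_zero_iff, expand_eq_zero hb] at h
    exact hp h
  have hdeg := congrArg natDegree h
  rw [natDegree_X_pow_mul _ ((expand_ne_zero hb).mpr hp),
    natDegree_X_pow_mul _ ((expand_ne_zero hb).mpr hq), natDegree_expand, natDegree_expand] at hdeg
  zify at hdeg
  exact ⟨q.natDegree - p.natDegree, by linear_combination hdeg⟩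

theorem Transcendental.X_pow_mul_expand_eq {R A : Type*} [CommRing R] [CommRing A] [Algebra R A]
    {u : A} (hu : Transcendental R u) {p q : R[X]} {b m n : ℕ}
    (h : u ^ m * Polynomial.aeval (u ^ b) p = u ^ n * Polynomial.aeval (u ^ b) q) :
    X ^ m * expand R b p = X ^ n * expand R b q :=
  transcendental_iff_injective.mp hu (by simpa [expand_aeval] using h)

theorem Polynomial.mem_lifts_algebraicClosure {F E : Type*} [Field F] [Field E] [Algebra F E]
    {p : E[X]} (h : ∀ i, IsAlgebraic F (p.coeff i)) :
    p ∈ lifts (algebraMap (algebraicClosure F E) E) :=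
  (lifts_iff_coeff_lifts p).mpr fun i ↦ ⟨⟨p.coeff i, mem_algebraicClosure_iff.mpr (h i)⟩, rfl⟩

theorem Polynomial.zpow_sub_mul_eval_div_eval_eq {F : Type*} [Field F] {P Q : F[X]} {m n : ℕ}
    {c : F} (h : X ^ m * P = X ^ n * (C c * Q)) {s : F} (hs : s ≠ 0) (hQs : Q.eval s ≠ 0) :
    s ^ ((m : ℤ) - n) * (P.eval s / Q.eval s) = c := by
  have hs' := congrArg (eval s) h
  simp only [eval_mul, eval_pow, eval_X, eval_C] at hs'
  rw [zpow_sub₀ hs, zpow_natCast, zpow_natCast]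
  field_simp
  linear_combination hs'

theorem Real.rpow_ratCast_eq_zpow_num {t : ℝ} (ht : 0 ≤ t) (r : ℚ) :
    t ^ (r : ℝ) = (t ^ (r.den : ℝ)⁻¹) ^ r.num := by
  rw [← Real.rpow_intCast, ← Real.rpow_mul ht, Rat.cast_def, div_eq_inv_mul]

theorem Rat.den_eq_one_of_den_dvd_num {r : ℚ} (h : (r.den : ℤ) ∣ r.num) : r.den = 1 :=
  r.reduced.symm.eq_one_of_dvd (Int.natCast_dvd.mp h)

/-- The paper's transcendence criterion: let `g(s) = P(s)/Q(s)` be a rational function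
with algebraic coefficients (`P, Q` nonzero), and let `r` be a rational number not in
the exceptional set `E` of integers `n` for which `s^n g(s)` is constant. Then for
every transcendental real `t > 0`, the number `t^r · g(t)` is transcendental. -/
theorem transcendence_criterion (P Q : Polynomial ℝ)
    (hP : P ≠ 0) (hQ : Q ≠ 0)
    (hPalg : ∀ i : ℕ, IsAlgebraic ℚ (P.coeff i))
    (hQalg : ∀ i : ℕ, IsAlgebraic ℚ (Q.coeff i))
    (r : ℚ)
    (hr : ¬ ∃ (n : ℤ) (c : ℝ), r = (n : ℚ) ∧
      ∀ s : ℝ, 0 < s → Q.eval s ≠ 0 → s ^ n * (P.eval s / Q.eval s) = c)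
    (t : ℝ) (ht0 : 0 < t) (ht : Transcendental ℚ t) :
    Transcendental ℚ (Real.rpow t (r : ℝ) * (P.eval t / Q.eval t)) := by
  intro hα
  obtain ⟨P, rfl⟩ := (mem_lifts _).mp (mem_lifts_algebraicClosure hPalg)
  obtain ⟨Q, rfl⟩ := (mem_lifts _).mp (mem_lifts_algebraicClosure hQalg)
  set u := t ^ (r.den : ℝ)⁻¹
  have hut : u ^ r.den = t := Real.rpow_inv_natCast_pow ht0.le r.den_nz
  have hu : Transcendental (algebraicClosure ℚ ℝ) u :=
    Transcendental.algebraicClosure fun h ↦ ht (hut ▸ h.pow r.den)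
  have hQt : (Q.map (algebraMap _ ℝ)).eval t ≠ 0 := by
    rw [eval_map_algebraMap]
    exact fun h ↦ ht.algebraicClosure ⟨Q, by simpa using hQ, h⟩
  have hu0 : u ≠ 0 := (Real.rpow_pos_of_pos ht0 _).ne'
  set m := r.num.toNat
  set n := (-r.num).toNat
  have htr : Real.rpow t r = u ^ m / u ^ n := by
    rw [Real.rpow_eq_pow, Real.rpow_ratCast_eq_zpow_num ht0.le, ← Int.toNat_sub_toNat_neg r.num,
      zpow_sub₀ hu0, zpow_natCast, zpow_natCast]
  let c : algebraicClosure ℚ ℝ := ⟨_, mem_algebraicClosure_iff.mpr hα⟩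
  have key : X ^ m * expand _ r.den P = X ^ n * expand _ r.den (C c * Q) := by
    refine hu.X_pow_mul_expand_eq ?_
    rw [hut, ← eval_map_algebraMap, map_mul, aeval_C, ← eval_map_algebraMap,
      IntermediateField.algebraMap_apply]
    simp only [c, htr]
    field_simp
  have hden : r.den = 1 := Rat.den_eq_one_of_den_dvd_num <| by
    simpa [m, n] using int_dvd_sub_of_X_pow_mul_expand_eq (by simpa using hP) r.pos key
  rw [hden, expand_one, expand_one] at key
  have hmap := congrArg (map (algebraMap _ ℝ)) key
  simp only [Polynomial.map_mul, Polynomial.map_pow, map_X, map_C] at hmap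
  refine hr ⟨r.num, c, (Rat.coe_int_num_of_den_eq_one hden).symm, fun s hs hQs ↦ ?_⟩
  simpa [m, n] using zpow_sub_mul_eval_div_eval_eq hmap hs.ne' hQs
end

section
/- Let u : ℕ → ℚ be any sequence and let H be the formal power series H(X) = Σ_{n=0}^∞ (u_n / n!) Xⁿ over ℚ. Let G be the formal power series obtained by substituting X · exp(−X) into H, where exp(−X) = Σ_{k=0}^∞ (−1)ᵏ Xᵏ / k! is the formal exponential series evaluated at −X (note X · exp(−X) has zero constant term, so the substitution is well defined). Write G(X) = Σ_{k=0}^∞ (v_k / k!) Xᵏ, i.e., v_k = k! · (coefficient of Xᵏ in G). Then v_0 = u_0 and, for every n ≥ 1, v_n = Σ_{m=1}^n C(n, m) · (−m)^{n−m} · u_m, where C(n, m) is the binomial coefficient. -/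
/-!
Since `(X · e^{aX})^m = X^m · e^{maX}`, the `k`-th coefficient of this power is
`(ma)^{k-m} / (k-m)!`. Multiplying the defining sum for `coeff k G` by `k!` therefore turns
`k! / (m! (k-m)!)` into `C(k, m)`, giving `k! · coeff k G = Σ_{m ≤ k} C(k, m) (-m)^{k-m} u_m`
for every `k`. The term `m = 0` equals `u_0` when `k = 0` and vanishes otherwise.
-/

open PowerSeries

theorem PowerSeries.coeff_X_mul_rescale_exp_pow {A : Type*} [CommRing A] [Algebra ℚ A]
    (a : A) {m k : ℕ} (h : m ≤ k) :
    coeff k ((X * rescale a (exp A)) ^ m) =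
      (m * a) ^ (k - m) * algebraMap ℚ A (1 / (k - m).factorial) := by
  rw [mul_pow, ← map_pow, exp_pow_eq_rescale_exp, coeff_X_pow_mul', if_pos h, coeff_rescale,
    coeff_rescale, coeff_exp, mul_pow]
  ring

theorem factorial_mul_coeff_eq_sum_choose (u : ℕ → ℚ) (G : ℚ⟦X⟧)
    (hG : ∀ k, coeff k G =
      ∑ n ∈ Finset.range (k + 1), u n / n.factorial * coeff k ((X * rescale (-1) (exp ℚ)) ^ n))
    (k : ℕ) :
    k.factorial * coeff k G =
      ∑ m ∈ Finset.range (k + 1), (k.choose m : ℚ) * (-(m : ℚ)) ^ (k - m) * u m := by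
  rw [hG, Finset.mul_sum]
  refine Finset.sum_congr rfl fun m hm => ?_
  have hmk : m ≤ k := Finset.mem_range_succ_iff.mp hm
  rw [coeff_X_mul_rescale_exp_pow _ hmk, Nat.cast_choose ℚ hmk, mul_neg_one,
    Algebra.algebraMap_self, RingHom.id_apply]
  field_simp

/-- Let `H(X) = Σ (u_n/n!) Xⁿ` be a formal power series over `ℚ` and let `G` be the
series obtained by substituting `X·exp(−X)` into `H`.  Since `X·exp(−X)` has zero
constant term, `(X·exp(−X))^n` has order at least `n`, so the `k`-th coefficient of
`G` is the (finite) sum `Σ_{n≤k} (u_n/n!)·coeff_k((X·exp(−X))^n)`; this is how `G`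
is characterized below.  Writing `v_k = k!·coeff_k G`, we have `v_0 = u_0` and, for
`n ≥ 1`, `v_n = Σ_{m=1}^n C(n,m) (−m)^{n−m} u_m`. -/
theorem associated_series_coeff (u : ℕ → ℚ) (G : PowerSeries ℚ)
    (hG : ∀ k : ℕ, PowerSeries.coeff k G =
      ∑ n ∈ Finset.range (k + 1), (u n / (n.factorial : ℚ)) *
        PowerSeries.coeff k
          ((PowerSeries.X * PowerSeries.rescale (-1 : ℚ) (PowerSeries.exp ℚ)) ^ n)) :
    ((0 : ℕ).factorial : ℚ) * PowerSeries.coeff 0 G = u 0 ∧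
    ∀ n : ℕ, 1 ≤ n →
      (n.factorial : ℚ) * PowerSeries.coeff n G =
        ∑ m ∈ Finset.Icc 1 n, (n.choose m : ℚ) * (-(m : ℚ)) ^ (n - m) * u m := by
  refine ⟨by simpa using factorial_mul_coeff_eq_sum_choose u G hG 0, fun n hn => ?_⟩
  rw [factorial_mul_coeff_eq_sum_choose u G hG, Finset.range_eq_Ico,
    Finset.sum_eq_sum_Ico_succ_bot n.succ_pos, Nat.succ_eq_add_one, Nat.zero_add,
    Finset.Ico_add_one_right_eq_Icc, Nat.cast_zero, neg_zero, zero_pow (by omega), mul_zero,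
    zero_mul, zero_add]
end

section
/- Let R be a commutative ring and let u, v : ℕ → R be sequences with u_0 = v_0. Then the following are equivalent: (i) for every n ≥ 1, u_n = Σ_{m=1}^n C(n−1, m−1) · n^{n−m} · v_m; (ii) for every n ≥ 1, v_n = Σ_{m=1}^n C(n, m) · (−m)^{n−m} · u_m. (Here C(a, b) denotes the binomial coefficient and the integer coefficients act on R via the canonical map ℤ → R.) -/
/-!
Both coefficient arrays are lower unitriangular on indices `≥ 1`, so each relation determines one
sequence from the other, and it suffices to check that the `invTreeCoeff`-matrix is a left inverse
of the `treeCoeff`-matrix. Its off-diagonal entries, scaled by `(k - 1)!`, are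
`Σₘ (-1)ⁿ⁻ᵐ C(n, m) P(m)` for `P(x) = xⁿ⁻ᵏ⁻¹ x(x - 1)⋯(x - k + 1)` of degree `n - 1`: an `n`-th
forward difference of a polynomial of degree `< n`, hence zero.
-/

open Finset Polynomial Nat

theorem Polynomial.sum_range_alternating_choose_mul_eval_eq_zero {R : Type*} [CommRing R]
    {P : R[X]} {n : ℕ} (hP : P.natDegree < n) :
    ∑ m ∈ range (n + 1), (-1) ^ (n - m) * n.choose m * P.eval (m : R) = 0 := by
  have h := congr_fun (P.fwdDiff_iter_eq_zero_of_degree_lt hP) 0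
  rw [fwdDiff_iter_eq_sum_shift] at h
  simpa [zsmul_eq_mul] using h

section TriangularInversion

variable {R : Type*} [Ring R]

theorem eq_of_sum_Icc_mul_eq_of_diag_eq_one {b : ℕ → ℕ → R} (hb : ∀ n, b n n = 1)
    {x y : ℕ → R}
    (h : ∀ n, 1 ≤ n → ∑ m ∈ Icc 1 n, b n m * x m = ∑ m ∈ Icc 1 n, b n m * y m) :
    ∀ n, 1 ≤ n → x n = y n := by
  intro n
  induction n using Nat.strong_induction_on with
  | _ n ih =>
    intro hn
    obtain ⟨n, rfl⟩ := Nat.exists_eq_add_of_le' hn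
    have hlower : ∑ m ∈ Icc 1 n, b (n + 1) m * x m = ∑ m ∈ Icc 1 n, b (n + 1) m * y m :=
      sum_congr rfl fun m hm ↦ by
        rw [ih m (Nat.lt_succ_of_le (mem_Icc.mp hm).2) (mem_Icc.mp hm).1]
    simpa [sum_Icc_succ_top, hb, hlower] using h (n + 1) hn

theorem sum_Icc_mul_sum_Icc_eq_self {a b : ℕ → ℕ → R}
    (hba : ∀ n k, 1 ≤ k → k ≤ n → ∑ m ∈ Icc k n, b n m * a m k = if n = k then 1 else 0)
    (v : ℕ → R) (n : ℕ) (hn : 1 ≤ n) :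
    ∑ m ∈ Icc 1 n, b n m * ∑ k ∈ Icc 1 m, a m k * v k = v n := by
  calc ∑ m ∈ Icc 1 n, b n m * ∑ k ∈ Icc 1 m, a m k * v k
      = ∑ k ∈ Icc 1 n, (∑ m ∈ Icc k n, b n m * a m k) * v k := by
        simp_rw [mul_sum, sum_mul, mul_assoc]
        exact sum_comm' fun m k ↦ by simp only [mem_Icc]; omega
    _ = ∑ k ∈ Icc 1 n, (if n = k then 1 else 0) * v k :=
        sum_congr rfl fun k hk ↦ by rw [hba n k (mem_Icc.mp hk).1 (mem_Icc.mp hk).2]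
    _ = v n := by simp [hn]

theorem sum_Icc_inversion {a b : ℕ → ℕ → R} (hb : ∀ n, b n n = 1)
    (hba : ∀ n k, 1 ≤ k → k ≤ n → ∑ m ∈ Icc k n, b n m * a m k = if n = k then 1 else 0)
    (u v : ℕ → R) :
    (∀ n, 1 ≤ n → u n = ∑ m ∈ Icc 1 n, a n m * v m) ↔
      (∀ n, 1 ≤ n → v n = ∑ m ∈ Icc 1 n, b n m * u m) := by
  constructor
  · intro hu n hn
    rw [← sum_Icc_mul_sum_Icc_eq_self hba v n hn]
    exact sum_congr rfl fun m hm ↦ by rw [hu m (mem_Icc.mp hm).1]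
  · intro hv
    refine eq_of_sum_Icc_mul_eq_of_diag_eq_one hb fun n hn ↦ ?_
    rw [← hv n hn, sum_Icc_mul_sum_Icc_eq_self hba v n hn]

end TriangularInversion

/- `treeCoeff n m` and `invTreeCoeff n m` are the coefficients of `xⁿ/n!` in `T(x)ᵐ/m!` and in
`(x e⁻ˣ)ᵐ/m!`, where the tree function `T` is the compositional inverse of `t e⁻ᵗ`. -/
def treeCoeff (n m : ℕ) : ℤ := (n - 1).choose (m - 1) * (n : ℤ) ^ (n - m)

def invTreeCoeff (n m : ℕ) : ℤ := n.choose m * (-(m : ℤ)) ^ (n - m)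

@[simp]
theorem invTreeCoeff_self (n : ℕ) : invTreeCoeff n n = 1 := by
  simp [invTreeCoeff]

theorem factorial_mul_invTreeCoeff_mul_treeCoeff {n m k : ℕ} (hk : 1 ≤ k) (hkm : k ≤ m)
    (hmn : m ≤ n) (hkn : k < n) :
    (k - 1)! * (invTreeCoeff n m * treeCoeff m k) =
      (-1) ^ (n - m) * n.choose m * ((m : ℤ) ^ (n - k - 1) * m.descFactorial k) := by
  obtain ⟨i, rfl⟩ := Nat.exists_eq_add_of_le' hk
  obtain ⟨j, rfl⟩ := Nat.exists_eq_add_of_le' (hk.trans hkm)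
  have hpow : ((j + 1 : ℕ) : ℤ) ^ (n - (i + 1) - 1) * (j + 1 : ℕ) =
      ((j + 1 : ℕ) : ℤ) ^ (n - (j + 1)) * ((j + 1 : ℕ) : ℤ) ^ (j + 1 - (i + 1)) := by
    rw [← pow_succ, ← pow_add]; congr 1; omega
  rw [Nat.succ_descFactorial_succ, Nat.descFactorial_eq_factorial_mul_choose]
  simp only [invTreeCoeff, treeCoeff, Nat.add_sub_cancel, neg_pow (((j + 1 : ℕ) : ℤ))]
  push_cast at hpow ⊢
  linear_combination -((-1) ^ (n - (j + 1)) * (n.choose (j + 1)) * i ! * (j.choose i)) * hpow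

theorem sum_Icc_invTreeCoeff_mul_treeCoeff {n k : ℕ} (hk : 1 ≤ k) (hkn : k ≤ n) :
    ∑ m ∈ Icc k n, invTreeCoeff n m * treeCoeff m k = if n = k then 1 else 0 := by
  rcases hkn.eq_or_lt with rfl | hlt
  · simp [treeCoeff]
  rw [if_neg hlt.ne']
  set P : ℤ[X] := X ^ (n - k - 1) * descPochhammer ℤ k
  have hdeg : P.natDegree < n := by
    rw [(monic_X_pow _).natDegree_mul (monic_descPochhammer ℤ k), natDegree_X_pow,
      descPochhammer_natDegree]
    omega
  have heval (m : ℕ) : P.eval (m : ℤ) = (m : ℤ) ^ (n - k - 1) * m.descFactorial k := by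
    simp [P, descPochhammer_eval_eq_descFactorial]
  have hvanish : ∑ m ∈ Icc k n, (-1) ^ (n - m) * n.choose m * P.eval (m : ℤ) = 0 := by
    rw [← sum_range_alternating_choose_mul_eval_eq_zero hdeg]
    refine sum_subset (fun m hm ↦ ?_) fun m hm hmk ↦ ?_
    · simp only [mem_Icc, mem_range] at hm ⊢; omega
    · simp only [mem_Icc, mem_range] at hm hmk
      simp [heval, Nat.descFactorial_of_lt (by omega : m < k)]
  have hscaled : ((k - 1)! : ℤ) * ∑ m ∈ Icc k n, invTreeCoeff n m * treeCoeff m k = 0 := by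
    rw [mul_sum, ← hvanish]
    refine sum_congr rfl fun m hm ↦ ?_
    rw [heval, factorial_mul_invTreeCoeff_mul_treeCoeff hk (mem_Icc.mp hm).1 (mem_Icc.mp hm).2 hlt]
  exact (mul_eq_zero.mp hscaled).resolve_left (by positivity)

theorem coeff_inversion_general {R : Type*} [CommRing R] (u v : ℕ → R) :
    (∀ n : ℕ, 1 ≤ n →
        u n = ∑ m ∈ Finset.Icc 1 n,
          ((((n - 1).choose (m - 1) : ℤ) * (n : ℤ) ^ (n - m) : ℤ) : R) * v m) ↔
    (∀ n : ℕ, 1 ≤ n →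
        v n = ∑ m ∈ Finset.Icc 1 n,
          (((n.choose m : ℤ) * (-(m : ℤ)) ^ (n - m) : ℤ) : R) * u m) := by
  refine sum_Icc_inversion (a := fun n m ↦ (treeCoeff n m : R))
    (b := fun n m ↦ (invTreeCoeff n m : R)) (by simp) (fun n k hk hkn ↦ ?_) u v
  have h := congrArg (Int.cast : ℤ → R) (sum_Icc_invTreeCoeff_mul_treeCoeff hk hkn)
  push_cast at h
  exact h

/-- Inversion between the coefficients of `H(x) = Σ uₙ xⁿ/n!` and of its associated
series `G(t) = H(t e^{−t}) = Σ vₖ tᵏ/k!`: given `u₀ = v₀`, the relation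
`uₙ = Σ_{m=1}^n C(n−1,m−1) n^{n−m} vₘ` (for all `n ≥ 1`) holds iff
`vₙ = Σ_{m=1}^n C(n,m) (−m)^{n−m} uₘ` (for all `n ≥ 1`). -/
theorem coeff_inversion {R : Type*} [CommRing R] (u v : ℕ → R) (h0 : u 0 = v 0) :
    (∀ n : ℕ, 1 ≤ n →
        u n = ∑ m ∈ Finset.Icc 1 n,
          ((((n - 1).choose (m - 1) : ℤ) * (n : ℤ) ^ (n - m) : ℤ) : R) * v m) ↔
    (∀ n : ℕ, 1 ≤ n →
        v n = ∑ m ∈ Finset.Icc 1 n,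
          (((n.choose m : ℤ) * (-(m : ℤ)) ^ (n - m) : ℤ) : R) * u m) :=
  coeff_inversion_general u v
end

section
/- Let k be an integer, let y be a real number with y > 0, and for x ∈ (0, 1/e) define f_k(x) = x^y · Σ_{n=0}^∞ (y + n)^{n−k} · xⁿ / n! (where x^y is the real power rpow and (y+n)^{n−k} is the integer power zpow with exponent n − k ∈ ℤ). Then for every x ∈ (0, 1/e), the function f_{k+1} is differentiable at x with derivative f_k(x) / x; equivalently, x · f_{k+1}′(x) = f_k(x). -/
/-!
Write `f_j(x) = x^y g_j(x)` with `g_j(x) = ∑ a_j(n) xⁿ` and `a_j(n) = (y+n)^(n-j)/n!`. Since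
`(y+n) a_{j+1}(n) = a_j(n)`, differentiating termwise gives
`x (x^y g_{j+1})' = x^y (y g_{j+1} + x g_{j+1}') = x^y ∑ (y+n) a_{j+1}(n) xⁿ = f_j(x)`.
Termwise differentiation is legitimate for `|x| < r < 1/e`: the exponential series gives
`(y+n)ⁿ ≤ e^(y+n) n!`, so `n a_j(n) r^(n-1)` is dominated by `(y+n)^(1-j) (e r)ⁿ`, which is
summable by the ratio test.
-/

open Filter Topology Metric

section PowerSeries

variable {𝕜 : Type*} [RCLike 𝕜] {a : ℕ → 𝕜} {r : ℝ} {x : 𝕜}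

theorem norm_mul_natCast_mul_pow_sub_one_le (a : 𝕜) (n : ℕ) {z : 𝕜} (hz : ‖z‖ ≤ r) :
    ‖a * (n * z ^ (n - 1))‖ ≤ ‖a‖ * (n * r ^ (n - 1)) := by
  rw [norm_mul, norm_mul, norm_pow, RCLike.norm_natCast]
  gcongr

theorem summable_mul_pow_zero (a : ℕ → 𝕜) : Summable fun n => a n * 0 ^ n :=
  (hasSum_single 0 fun n hn => by rw [zero_pow hn, mul_zero]).summable

variable (ha : Summable fun n => ‖a n‖ * (n * r ^ (n - 1))) (hx : ‖x‖ < r)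
include ha hx

theorem summable_mul_pow_of_summable_deriv : Summable fun n => a n * x ^ n :=
  summable_of_summable_hasDerivAt_of_isPreconnected (g := fun n z => a n * z ^ n) ha isOpen_ball
    (convex_ball 0 r).isPreconnected
    (fun n z _ => (hasDerivAt_pow n z).const_mul (a n))
    (fun n _ hz => norm_mul_natCast_mul_pow_sub_one_le (a n) n (mem_ball_zero_iff.1 hz).le)
    (mem_ball_self ((norm_nonneg x).trans_lt hx)) (summable_mul_pow_zero a)
    (mem_ball_zero_iff.2 hx)

theorem hasDerivAt_tsum_mul_pow :
    HasDerivAt (fun z => ∑' n, a n * z ^ n) (∑' n, a n * (n * x ^ (n - 1))) x :=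
  hasDerivAt_tsum_of_isPreconnected ha isOpen_ball
    (convex_ball 0 r).isPreconnected
    (fun n z _ => (hasDerivAt_pow n z).const_mul (a n))
    (fun n _ hz => norm_mul_natCast_mul_pow_sub_one_le (a n) n (mem_ball_zero_iff.1 hz).le)
    (mem_ball_self ((norm_nonneg x).trans_lt hx)) (summable_mul_pow_zero a)
    (mem_ball_zero_iff.2 hx)

theorem summable_mul_natCast_mul_pow_sub_one : Summable fun n => a n * (n * x ^ (n - 1)) :=
  .of_norm_bounded ha fun n => norm_mul_natCast_mul_pow_sub_one_le (a n) n hx.le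

theorem tsum_add_natCast_mul_mul_pow (c : 𝕜) :
    ∑' n, (c + n) * a n * x ^ n =
      c * ∑' n, a n * x ^ n + x * ∑' n, a n * (n * x ^ (n - 1)) := by
  have hshift : ∀ n : ℕ, x * (a n * (n * x ^ (n - 1))) = a n * (n * x ^ n) := fun n => by
    rcases n with _ | n
    · simp
    · rw [Nat.add_sub_cancel, pow_succ]; ring
  rw [← tsum_mul_left, ← tsum_mul_left, tsum_congr hshift,
    ← (summable_mul_pow_of_summable_deriv ha hx).mul_left c |>.tsum_add
      ((summable_mul_natCast_mul_pow_sub_one ha hx).mul_left x |>.congr hshift)]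
  exact tsum_congr fun n => by ring

end PowerSeries

theorem summable_zpow_natCast_add_mul_geometric {y q : ℝ} (hy : 0 < y) (m : ℤ) (hq₀ : 0 < q)
    (hq₁ : q < 1) : Summable fun n : ℕ => (y + n) ^ m * q ^ n := by
  have hpos : ∀ n : ℕ, 0 < y + n := fun n => by positivity
  refine summable_of_ratio_test_tendsto_lt_one hq₁
    (.of_forall fun n => (mul_pos (zpow_pos (hpos n) m) (pow_pos hq₀ n)).ne') ?_
  have hinv : Tendsto (fun n : ℕ => (y + n)⁻¹) atTop (𝓝 0) :=
    tendsto_inv_atTop_zero.comp (tendsto_atTop_add_const_left _ y tendsto_natCast_atTop_atTop)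
  have hlim : Tendsto (fun n : ℕ => (1 + (y + n)⁻¹) ^ m * q) atTop (𝓝 q) := by
    simpa using
      (((tendsto_const_nhds (x := (1 : ℝ))).add hinv).zpow₀ m (.inl (by norm_num))).mul_const q
  refine hlim.congr fun n => ?_
  have hn := (hpos n).ne'
  rw [Real.norm_of_nonneg (by positivity), Real.norm_of_nonneg (by positivity),
    show 1 + (y + n)⁻¹ = (y + ↑(n + 1)) / (y + n) by field_simp; push_cast; ring,
    div_zpow, pow_succ]
  field_simp

section Kolberg

open Real

noncomputable def kolbergCoeff (y : ℝ) (j : ℤ) (n : ℕ) : ℝ :=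
  (y + n) ^ ((n : ℤ) - j) / n.factorial

variable {y : ℝ} (j : ℤ) (n : ℕ)

theorem kolbergCoeff_mul_pow (x : ℝ) :
    kolbergCoeff y j n * x ^ n = (y + n) ^ ((n : ℤ) - j) * x ^ n / n.factorial :=
  div_mul_eq_mul_div _ _ _

theorem kolbergCoeff_pos (hy : 0 < y) : 0 < kolbergCoeff y j n := by
  unfold kolbergCoeff; positivity

theorem add_mul_kolbergCoeff_add_one (hy : 0 < y) :
    (y + n) * kolbergCoeff y (j + 1) n = kolbergCoeff y j n := by
  have hn : y + n ≠ 0 := by positivity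
  rw [kolbergCoeff, kolbergCoeff, ← mul_div_assoc, ← zpow_one_add₀ hn]
  ring_nf

theorem kolbergCoeff_le (hy : 0 < y) :
    kolbergCoeff y j n ≤ exp y * (y + n) ^ (-j) * exp 1 ^ n := by
  have hn : 0 < y + n := by positivity
  have hpow : (y + n) ^ n / n.factorial ≤ exp y * exp 1 ^ n := by
    rw [exp_one_pow, ← exp_add]
    exact pow_div_factorial_le_exp _ hn.le n
  calc kolbergCoeff y j n = (y + n) ^ n / n.factorial * (y + n) ^ (-j) := by
        rw [kolbergCoeff, sub_eq_add_neg, zpow_add₀ hn.ne', zpow_natCast, div_mul_eq_mul_div]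
    _ ≤ exp y * exp 1 ^ n * (y + n) ^ (-j) := by gcongr
    _ = exp y * (y + n) ^ (-j) * exp 1 ^ n := by ring

theorem summable_norm_kolbergCoeff_mul_deriv {r : ℝ} (hy : 0 < y) (hr₀ : 0 < r)
    (hr : r * exp 1 < 1) :
    Summable fun n => ‖kolbergCoeff y j n‖ * (n * r ^ (n - 1)) := by
  refine .of_nonneg_of_le (fun n => by positivity) (fun n => ?_)
    ((summable_zpow_natCast_add_mul_geometric hy (1 - j) (by positivity) hr).mul_left
      (exp y / r))
  have hn : 0 < y + n := by positivity
  have hderiv : n * r ^ (n - 1) ≤ (y + n) * r ^ n / r := by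
    rcases n with _ | n
    · simp only [CharP.cast_eq_zero, zero_mul]; positivity
    · rw [pow_succ, mul_div_assoc, mul_div_cancel_right₀ _ hr₀.ne', Nat.add_sub_cancel]
      gcongr; linarith
  calc ‖kolbergCoeff y j n‖ * (n * r ^ (n - 1))
      ≤ exp y * (y + n) ^ (-j) * exp 1 ^ n * ((y + n) * r ^ n / r) := by
        rw [norm_of_nonneg (kolbergCoeff_pos j n hy).le]
        gcongr
        exact kolbergCoeff_le j n hy
    _ = exp y / r * ((y + n) ^ (1 - j) * (r * exp 1) ^ n) := by
        rw [sub_eq_neg_add, zpow_add_one₀ hn.ne']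
        ring

end Kolberg

/-- Relation (1k) for the Kolberg quatuor: with
`f_k(x) = x^y · Σ_{n=0}^∞ (y+n)^{n−k} xⁿ/n!`, for every `x ∈ (0, 1/e)` the function
`f_{k+1}` is differentiable at `x` with derivative `f_k(x)/x`, i.e. `x·f_{k+1}′(x) = f_k(x)`. -/
theorem kolberg_quatuor_relation_1k (k : ℤ) (y : ℝ) (hy : 0 < y) :
    ∀ x ∈ Set.Ioo (0 : ℝ) (1 / Real.exp 1),
      HasDerivAt
        (fun z : ℝ => Real.rpow z y *
          ∑' n : ℕ, ((y + (n : ℝ)) ^ ((n : ℤ) - (k + 1))) * z ^ n / (n.factorial : ℝ))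
        ((Real.rpow x y *
          ∑' n : ℕ, ((y + (n : ℝ)) ^ ((n : ℤ) - k)) * x ^ n / (n.factorial : ℝ)) / x)
        x := by
  rintro x ⟨hx₀, hxe⟩
  obtain ⟨r, hxr, hre⟩ := exists_between hxe
  have hx : ‖x‖ < r := by rwa [Real.norm_of_nonneg hx₀.le]
  have ha := summable_norm_kolbergCoeff_mul_deriv (k + 1) hy (hx₀.trans hxr)
    ((lt_div_iff₀ (Real.exp_pos 1)).1 hre)
  simp_rw [← kolbergCoeff_mul_pow, ← add_mul_kolbergCoeff_add_one k _ hy]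
  refine ((Real.hasDerivAt_rpow_const (.inl hx₀.ne')).mul
    (hasDerivAt_tsum_mul_pow ha hx)).congr_deriv ?_
  rw [tsum_add_natCast_mul_mul_pow ha hx, Real.rpow_sub_one hx₀.ne']
  field_simp
  exact mul_comm _ _
end

section
/- Let y be a nonzero real number and let t be any real number. Then (1 + 2/y + t²) · e^{yt} = (y + 2)/y + Σ_{n=1}^∞ (y² + 2y + n(n−1)) · y^{n−2} · tⁿ / n!, where y^{n−2} denotes the integer power zpow with exponent n − 2 ∈ ℤ, and the series on the right is absolutely convergent. -/
/-!
Split the coefficient as `(y² + 2y + n(n-1)) y^(n-2) = (1 + 2/y) yⁿ + n(n-1) y^(n-2)`. The first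
part gives `(1 + 2/y)(e^{yt} - 1)`, the exponential series without its constant term; the second
vanishes at `n = 1` and, shifted by two, is `t²` times the exponential series of `yt`.
-/

open Nat

lemma Real.hasSum_pow_div_factorial (x : ℝ) : HasSum (fun n : ℕ => x ^ n / n !) (Real.exp x) :=
  Real.exp_eq_exp_ℝ ▸ NormedSpace.expSeries_div_hasSum_exp x

lemma Real.hasSum_pow_succ_div_factorial_succ (x : ℝ) :
    HasSum (fun n : ℕ => x ^ (n + 1) / (n + 1)!) (Real.exp x - 1) := by
  simpa using (hasSum_nat_add_iff' 1).mpr (Real.hasSum_pow_div_factorial x)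

lemma hasSum_sq_mul_exp_mul (y t : ℝ) :
    HasSum (fun n : ℕ => (n + 1) * n * y ^ ((n : ℤ) - 1) * t ^ (n + 1) / (n + 1)!)
      (t ^ 2 * Real.exp (y * t)) := by
  rw [← hasSum_nat_add_iff' 1]
  simpa using ((Real.hasSum_pow_div_factorial (y * t)).mul_left (t ^ 2)).congr_fun fun n => by
    rw [factorial_succ (n + 1), factorial_succ n]
    push_cast
    field_simp
    ring

lemma hasSum_generating_function {y : ℝ} (hy : y ≠ 0) (t : ℝ) :
    HasSum (fun n : ℕ =>
      (y ^ 2 + 2 * y + ((n : ℝ) + 1) * (((n : ℝ) + 1) - 1)) * (y ^ ((n : ℤ) + 1 - 2))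
        * t ^ (n + 1) / ((n + 1).factorial : ℝ))
      ((1 + 2 / y + t ^ 2) * Real.exp (y * t) - (y + 2) / y) := by
  rw [show (1 + 2 / y + t ^ 2) * Real.exp (y * t) - (y + 2) / y =
      (1 + 2 / y) * (Real.exp (y * t) - 1) + t ^ 2 * Real.exp (y * t) by field_simp; ring]
  refine (((Real.hasSum_pow_succ_div_factorial_succ (y * t)).mul_left (1 + 2 / y)).add
    (hasSum_sq_mul_exp_mul y t)).congr_fun fun n => ?_
  rw [show (n : ℤ) + 1 - 2 = n - 1 by ring, zpow_sub_one₀ hy, zpow_natCast]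
  field_simp
  ring

/-- Power series expansion of the generating function of the paper's illustration:
for `y ≠ 0` and any real `t`,
`(1 + 2/y + t²)·e^{yt} = (y+2)/y + Σ_{n=1}^∞ (y² + 2y + n(n−1)) y^{n−2} tⁿ/n!`,
the series being absolutely convergent. -/
theorem generating_function_expansion (y : ℝ) (hy : y ≠ 0) (t : ℝ) :
    Summable (fun n : ℕ =>
      (y ^ 2 + 2 * y + ((n : ℝ) + 1) * (((n : ℝ) + 1) - 1)) * (y ^ ((n : ℤ) + 1 - 2))
        * t ^ (n + 1) / ((n + 1).factorial : ℝ)) ∧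
    (1 + 2 / y + t ^ 2) * Real.exp (y * t) =
      (y + 2) / y + ∑' n : ℕ,
        (y ^ 2 + 2 * y + ((n : ℝ) + 1) * (((n : ℝ) + 1) - 1)) * (y ^ ((n : ℤ) + 1 - 2))
          * t ^ (n + 1) / ((n + 1).factorial : ℝ) := by
  have h := hasSum_generating_function hy t
  exact ⟨h.summable, by rw [h.tsum_eq]; ring⟩
end

section
/- For every integer n ≥ 3, the following identity holds in the polynomial ring ℤ[Y]: Σ_{m=1}^n C(n−1, m−1) · n^{n−m} · (Y² + 2Y + m(m−1)) · Y^{m−1} = Y · (Y + 2) · (Y² + 2nY + 2n² − n) · (Y + n)^{n−3}, where C(n−1, m−1) denotes the binomial coefficient. -/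
/-!
Put `i = m - 1`, `N = n - 1` and `y = n`. Since `m (m - 1) = (i + 1) i = 2 (C(i,1) + C(i,2))`, the sum
splits into three sums `Σ_i C(i,k) C(N,i) Y^i y^(N-i)` with `k = 0, 1, 2`, and the absorption
identity `C(N,i) C(i,k) = C(N,k) C(N-k,i-k)` turns each into `C(N,k) Y^k (Y + y)^(N-k)` by the
binomial theorem. What remains after factoring out `(Y + n)^(n-3)` is a polynomial identity of degree 4.
-/

open Polynomial Finset

theorem sum_range_choose_mul_choose_mul_pow {R : Type*} [CommSemiring R] (x y : R) (N k : ℕ) :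
    ∑ i ∈ range (N + 1), (i.choose k * N.choose i : R) * x ^ i * y ^ (N - i) =
      N.choose k * x ^ k * (x + y) ^ (N - k) := by
  rcases lt_or_ge N k with hNk | hkN
  · rw [Nat.choose_eq_zero_of_lt hNk]
    refine (sum_eq_zero fun i hi => ?_).trans (by simp)
    rw [Nat.choose_eq_zero_of_lt (by grind)]
    simp
  obtain ⟨M, rfl⟩ := Nat.exists_eq_add_of_le hkN
  have below_k : ∑ i ∈ range k, (i.choose k * (k + M).choose i : R) * x ^ i * y ^ (k + M - i) = 0 :=
    sum_eq_zero fun i hi => by rw [Nat.choose_eq_zero_of_lt (mem_range.1 hi)]; simp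
  rw [add_assoc, sum_range_add, below_k, zero_add, Nat.add_sub_cancel_left, add_pow, mul_sum]
  refine sum_congr rfl fun j _ => ?_
  have hchoose : (k + M).choose (k + j) * (k + j).choose k = (k + M).choose k * M.choose j := by
    simpa using Nat.choose_mul (n := k + M) (k := k + j) (Nat.le_add_right k j)
  rw [Nat.add_sub_add_left, pow_add, mul_comm ((k + j).choose k : R), ← Nat.cast_mul, hchoose]
  push_cast
  ring

theorem add_one_mul_self_eq_two_mul_choose (i : ℕ) : (i + 1) * i = 2 * (i.choose 1 + i.choose 2) := by
  have h := Nat.add_one_mul_choose_eq i 1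
  rw [Nat.choose_succ_succ'] at h
  simp only [Nat.choose_one_right] at *
  linarith

theorem sum_range_choose_mul_pow_mul_add_one_mul_self {R : Type*} [CommSemiring R] (x y : R) (N : ℕ) :
    ∑ i ∈ range (N + 3),
        ((N + 2).choose i : R) * y ^ (N + 2 - i) * (x ^ 2 + 2 * x + ((i + 1) * i : ℕ)) * x ^ i =
      (x + y) ^ N * ((x ^ 2 + 2 * x) * (x + y) ^ 2 + 2 * (N + 2) * x * (x + y)
        + (N + 2) * (N + 1) * x ^ 2) := by
  let T (k i : ℕ) : R := (i.choose k * (N + 2).choose i : R) * x ^ i * y ^ (N + 2 - i)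
  have hT (k : ℕ) : ∑ i ∈ range (N + 3), T k i = ((N + 2).choose k : R) * x ^ k * (x + y) ^ (N + 2 - k) :=
    sum_range_choose_mul_choose_mul_pow x y (N + 2) k
  have hchoose : ((N + 2).choose 2 : R) * 2 = (N + 2) * (N + 1) := by
    have h : (N + 2).choose 2 * 2 = (N + 2) * (N + 1) := by
      simpa using (Nat.add_one_mul_choose_eq (N + 1) 1).symm
    exact_mod_cast congrArg (Nat.cast (R := R)) h
  calc _ = ∑ i ∈ range (N + 3), ((x ^ 2 + 2 * x) * T 0 i + 2 * T 1 i + 2 * T 2 i) := by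
        refine sum_congr rfl fun i _ => ?_
        rw [add_one_mul_self_eq_two_mul_choose]
        simp only [T, Nat.choose_zero_right]
        push_cast
        ring
    _ = (x ^ 2 + 2 * x) * ∑ i ∈ range (N + 3), T 0 i + 2 * ∑ i ∈ range (N + 3), T 1 i
          + 2 * ∑ i ∈ range (N + 3), T 2 i := by
        simp only [sum_add_distrib, mul_sum]
    _ = (x ^ 2 + 2 * x) * (x + y) ^ (N + 2) + 2 * ((N + 2) * x * (x + y) ^ (N + 1))
          + ((N + 2).choose 2 : R) * 2 * x ^ 2 * (x + y) ^ N := by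
        rw [hT, hT, hT, Nat.choose_zero_right, Nat.choose_one_right]
        push_cast
        ring
    _ = _ := by
        rw [hchoose]
        ring

/-- For every integer `n ≥ 3`, the identity in `ℤ[Y]`:
`Σ_{m=1}^n C(n−1,m−1) n^{n−m} (Y² + 2Y + m(m−1)) Y^{m−1}
  = Y (Y+2) (Y² + 2nY + 2n² − n) (Y+n)^{n−3}`. -/
theorem illustration_polynomial_identity (n : ℕ) (hn : 3 ≤ n) :
    ∑ m ∈ Finset.Icc 1 n,
        C (((n - 1).choose (m - 1) : ℤ)) * C ((n : ℤ) ^ (n - m)) *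
          (X ^ 2 + 2 * X + C ((m : ℤ) * ((m : ℤ) - 1))) * X ^ (m - 1) =
      X * (X + 2) * (X ^ 2 + C (2 * (n : ℤ)) * X + C (2 * (n : ℤ) ^ 2 - (n : ℤ))) *
        (X + C (n : ℤ)) ^ (n - 3) := by
  obtain ⟨K, rfl⟩ := Nat.exists_eq_add_of_le' hn
  rw [← Ico_add_one_right_eq_Icc, sum_Ico_eq_sum_range, Nat.add_sub_cancel]
  calc _ = ∑ i ∈ range (K + 3), ((K + 2).choose i : ℤ[X]) * ((K + 3 : ℕ) : ℤ[X]) ^ (K + 2 - i)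
          * (X ^ 2 + 2 * X + (((i + 1) * i : ℕ) : ℤ[X])) * X ^ i := by
        refine sum_congr rfl fun i _ => ?_
        have hm : ((1 + i : ℕ) : ℤ) * ((1 + i : ℕ) - 1) = ((i + 1) * i : ℕ) := by push_cast; ring
        rw [hm, show K + 3 - 1 = K + 2 from rfl, show K + 3 - (1 + i) = K + 2 - i by omega]
        simp only [map_pow, map_natCast, Nat.add_sub_cancel_left]
    _ = _ := by
        rw [sum_range_choose_mul_pow_mul_add_one_mul_self]
        simp only [map_sub, map_mul, map_pow, map_ofNat, map_natCast, Nat.add_sub_cancel]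
        push_cast
        ring
end
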